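/- In the simplicial setup, let Γ₁, …, Γ_e be all the equivalence classes of B_A. Then M_B = ∪_{i=1}^e M_{Γ_i}. -/

import Mathlib

namespace SimplicialToric

/-- `eVec d α i` is `α` times the `i`-th standard basis vector of `ℕ^d`. -/
def eVec (d α : ℕ) (i : Fin d) : Fin d → ℕ := fun j => if j = i then α else 0

/-- The Hilbert basis of a submonoid `B ⊆ ℕ^d`: the set of irreducible elements
(in `ℕ^d` the only unit is `0`). -/
def Hilb {d : ℕ} (B : AddSubmonoid (Fin d → ℕ)) : Set (Fin d → ℕ) :=
  {b | b ∈ B ∧ b ≠ 0 ∧ ∀ x ∈ B, ∀ y ∈ B, b = x + y → x = 0 ∨ y = 0}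

/-- The submonoid `A = Σᵢ ℤ≥0·eᵢ = αℤ≥0^d`. -/
def Amon (d α : ℕ) : AddSubmonoid (Fin d → ℕ) :=
  AddSubmonoid.closure (Set.range (eVec d α))

/-- `B_A = {x ∈ B : x − a ∉ B for every a ∈ A \ {0}}`. -/
def BA {d : ℕ} (B : AddSubmonoid (Fin d → ℕ)) (α : ℕ) : Set (Fin d → ℕ) :=
  {x | x ∈ B ∧ ∀ z ∈ Amon d α, z ≠ 0 → ∀ y ∈ B, x ≠ y + z}

/-- The generators `a₁,…,a_c,e₁,…,e_d` of `B`, indexed by the variables of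
`S = K[x₁,…,x_c,y₁,…,y_d]`; variable `Fin.castAdd d i` is `xᵢ`, variable
`Fin.natAdd c j` is `yⱼ`. -/
def gens (c d α : ℕ) (a : Fin c → Fin d → ℕ) : Fin (c + d) → Fin d → ℕ :=
  Fin.addCases a (eVec d α)

/-- The element of `B` represented by the monomial with exponent vector `σ`:
`π(x^μ y^ν) = t^(valE σ)`. -/
def valE (c d α : ℕ) (a : Fin c → Fin d → ℕ) (σ : Fin (c + d) →₀ ℕ) : Fin d → ℕ :=
  ∑ v : Fin (c + d), σ v • gens c d α a v

/-- total degree of a monomial (exponent vector). -/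
def degE {N : ℕ} (σ : Fin N →₀ ℕ) : ℕ := ∑ v, σ v

/-- the graded reverse lexicographic order: `grevlex σ τ` means `σ ≺ τ`,
i.e. `deg σ < deg τ`, or degrees agree and the last nonzero entry of `τ − σ`
is negative. -/
def grevlex {N : ℕ} (σ τ : Fin N →₀ ℕ) : Prop :=
  degE σ < degE τ ∨ (degE σ = degE τ ∧ ∃ k, τ k < σ k ∧ ∀ l, k < l → σ l = τ l)

/-- `x ∼ y` iff `x − y ∈ gp(A) = αℤ^d`. -/
def Rel {d : ℕ} (α : ℕ) (x y : Fin d → ℕ) : Prop :=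
  ∀ j, (α : ℤ) ∣ (x j : ℤ) - (y j : ℤ)

/-- `Γ` is an equivalence class of `B_A` modulo `αℤ^d`. -/
def IsClass {d : ℕ} (B : AddSubmonoid (Fin d → ℕ)) (α : ℕ) (Γ : Set (Fin d → ℕ)) : Prop :=
  ∃ x ∈ BA B α, Γ = {y | y ∈ BA B α ∧ Rel α x y}

/-- the total order on an equivalence class of `B_A`: `b ≺ c` iff the last
nonzero entry of `b − c` is negative. -/
def ltCls {d : ℕ} (x y : Fin d → ℕ) : Prop :=
  ∃ k, x k < y k ∧ ∀ l, k < l → x l = y l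

/-- `joinSub x y = x∨y − y`, where `x∨y` is the componentwise maximum. -/
def joinSub {d : ℕ} (x y : Fin d → ℕ) : Fin d → ℕ := fun j => max (x j) (y j) - y j

/-- the monomial with exponents `σ` lies in `T = K[y₁,…,y_d]`. -/
def yOnly (c d : ℕ) (σ : Fin (c + d) →₀ ℕ) : Prop := ∀ i : Fin c, σ (Fin.castAdd d i) = 0

/-- the monomial with exponents `σ` involves only the `x`-variables. -/
def xOnly (c d : ℕ) (σ : Fin (c + d) →₀ ℕ) : Prop := ∀ j : Fin d, σ (Fin.natAdd c j) = 0

/-- the set `N₁`, for a given choice `m` of the minimal monomials `m_b`. -/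
def N1set (c d α : ℕ) (a : Fin c → Fin d → ℕ) (B : AddSubmonoid (Fin d → ℕ))
    (m : (Fin d → ℕ) → (Fin (c + d) →₀ ℕ)) : Set (Fin (c + d) →₀ ℕ) :=
  {n | ∃ (i : Fin c) (b : Fin d → ℕ), b ∈ BA B α ∧
    n = Finsupp.single (Fin.castAdd d i) 1 + m b ∧ n ≠ m (a i + b)}

/-- the set `N₂ = ∪_Γ N_Γ`, where `N_Γ = {n(bᵢ,bⱼ) = m_{bⱼ}·m_{bᵢ∨bⱼ−bⱼ} : bᵢ ≺ bⱼ in Γ}`. -/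
def N2set {d : ℕ} (c α : ℕ) (B : AddSubmonoid (Fin d → ℕ))
    (m : (Fin d → ℕ) → (Fin (c + d) →₀ ℕ)) : Set (Fin (c + d) →₀ ℕ) :=
  {n | ∃ Γ, IsClass B α Γ ∧ ∃ bi ∈ Γ, ∃ bj ∈ Γ, ltCls bi bj ∧ n = m bj + m (joinSub bi bj)}

/-- `σ` is the exponent vector of the initial (i.e. `≺`-largest) term of `f`. -/
def IsLeadMon {N : ℕ} {K : Type*} [Field K] (f : MvPolynomial (Fin N) K)
    (σ : Fin N →₀ ℕ) : Prop :=
  σ ∈ f.support ∧ ∀ τ ∈ f.support, τ = σ ∨ grevlex τ σ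

/-- the initial ideal of `I` with respect to the graded reverse lexicographic order. -/
noncomputable def initialIdeal {N : ℕ} {K : Type*} [Field K] (I : Ideal (MvPolynomial (Fin N) K)) :
    Ideal (MvPolynomial (Fin N) K) :=
  Ideal.span {g | ∃ f ∈ I, ∃ σ, IsLeadMon f σ ∧ g = MvPolynomial.monomial σ (1 : K)}

end SimplicialToric

open SimplicialToric

namespace SimplicialToric

/-- For an equivalence class \`Γ\` of \`B_A\` the set
\`M_Γ = ∪_{b ∈ Γ} (m_b·M_T \ ∪_{b' ≺ b in Γ} n(b',b)·M_T)\`. -/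
def MGamma (c d α : ℕ) (m : (Fin d → ℕ) → (Fin (c + d) →₀ ℕ)) (Γ : Set (Fin d → ℕ)) :
    Set (Fin (c + d) →₀ ℕ) :=
  {σ | ∃ b ∈ Γ, (∃ τ, yOnly c d τ ∧ σ = m b + τ) ∧
    ∀ b' ∈ Γ, ltCls b' b → ¬ ∃ τ, yOnly c d τ ∧ σ = (m b + m (joinSub b' b)) + τ}

end SimplicialToric

/-!
Since `≺` is a graded order with the `y`-variables last, trading an `eⱼ` for `yⱼ` lowers a
monomial; hence `m_z = y^(z/α)` for `z ∈ αℕ^d`, and an element of `B` lies in `B_A` iff its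
minimal monomial is a pure `x`-monomial. Divisors of standard monomials are standard, so every
`σ ∈ M_B` factors as `m_b·y^τ` with `b ∈ B_A`. For `b' ≺ b` in one class, `n(b', b)` is not
standard: `m_{b'}·y^((b'∨b−b')/α)` has the same image and is smaller. Conversely, if `m_b·y^τ`
has standard form `m_{b'}·y^τ'` with `b' ∈ B_A`, then `b ∼ b'`, and `b ≠ b'` would make one of
the two monomials a multiple of an `n(·, ·)`.
-/

namespace SimplicialToric

section Grevlex

variable {N : ℕ}

lemma degE_add (σ τ : Fin N →₀ ℕ) : degE (σ + τ) = degE σ + degE τ := by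
  simp [degE, Finset.sum_add_distrib]

lemma grevlex_asymm {σ τ : Fin N →₀ ℕ} (h : grevlex σ τ) : ¬ grevlex τ σ := by
  rintro h'
  rcases h with h | ⟨hd, k, hk, hk'⟩ <;> rcases h' with h' | ⟨hd', l, hl, hl'⟩ <;> try omega
  rcases lt_trichotomy k l with hkl | rfl | hkl
  · have := hk' l hkl; omega
  · omega
  · have := hl' k hkl; omega

lemma grevlex_irrefl (σ : Fin N →₀ ℕ) : ¬ grevlex σ σ := fun h => grevlex_asymm h h

lemma grevlex_add_right {σ τ : Fin N →₀ ℕ} (h : grevlex σ τ) (ρ : Fin N →₀ ℕ) :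
    grevlex (σ + ρ) (τ + ρ) := by
  simp only [grevlex, degE_add, Finsupp.add_apply] at h ⊢
  rcases h with h | ⟨hd, k, hk, hk'⟩
  · exact Or.inl (by omega)
  · exact Or.inr ⟨by omega, k, by omega, fun l hl => by rw [hk' l hl]⟩

end Grevlex

lemma exists_lastDiff {n : ℕ} {f g : Fin n → ℕ} (h : f ≠ g) :
    ∃ k, f k ≠ g k ∧ ∀ l, k < l → f l = g l := by
  have hne : (Finset.univ.filter fun k => f k ≠ g k).Nonempty := by
    obtain ⟨k, hk⟩ := Function.ne_iff.mp h
    exact ⟨k, by simpa using hk⟩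
  refine ⟨_, (Finset.mem_filter.mp (Finset.max'_mem _ hne)).2, fun l hl => ?_⟩
  by_contra hl'
  exact (Finset.le_max' _ l (by simpa using hl')).not_gt hl

lemma ltCls_trichotomy {d : ℕ} (x y : Fin d → ℕ) : x = y ∨ ltCls x y ∨ ltCls y x := by
  by_cases h : x = y
  · exact Or.inl h
  obtain ⟨k, hk, hk'⟩ := exists_lastDiff h
  rcases Nat.lt_or_gt_of_ne hk with hlt | hlt
  · exact Or.inr (Or.inl ⟨k, hlt, hk'⟩)
  · exact Or.inr (Or.inr ⟨k, hlt, fun l hl => (hk' l hl).symm⟩)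

variable {c d α : ℕ} {a : Fin c → Fin d → ℕ} {B : AddSubmonoid (Fin d → ℕ)}
  {m : (Fin d → ℕ) → (Fin (c + d) →₀ ℕ)}

lemma degE_eq_sum_castAdd_add_sum_natAdd (σ : Fin (c + d) →₀ ℕ) :
    degE σ = ∑ i, σ (Fin.castAdd d i) + ∑ j, σ (Fin.natAdd c j) :=
  Fin.sum_univ_add _

lemma exists_natAdd_of_natAdd_lt {k : Fin d} {l : Fin (c + d)} (h : Fin.natAdd c k < l) :
    ∃ j, k < j ∧ l = Fin.natAdd c j := by
  induction l using Fin.addCases with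
  | left i =>
    rw [Fin.lt_def, Fin.val_natAdd, Fin.val_castAdd] at h
    omega
  | right j =>
    rw [Fin.lt_def, Fin.val_natAdd, Fin.val_natAdd] at h
    exact ⟨j, Fin.lt_def.mpr (by omega), rfl⟩

lemma grevlex_of_natAdd {σ τ : Fin (c + d) →₀ ℕ} (hdeg : degE σ = degE τ) (k : Fin d)
    (hk : τ (Fin.natAdd c k) < σ (Fin.natAdd c k))
    (hk' : ∀ j, k < j → σ (Fin.natAdd c j) = τ (Fin.natAdd c j)) : grevlex σ τ := by
  refine Or.inr ⟨hdeg, Fin.natAdd c k, hk, fun l hl => ?_⟩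
  obtain ⟨j, hkj, rfl⟩ := exists_natAdd_of_natAdd_lt hl
  exact hk' j hkj

lemma grevlex_of_natAdd_le {σ τ : Fin (c + d) →₀ ℕ} (hdeg : degE σ = degE τ)
    (hle : ∀ j, τ (Fin.natAdd c j) ≤ σ (Fin.natAdd c j))
    (hne : (fun j => τ (Fin.natAdd c j)) ≠ fun j => σ (Fin.natAdd c j)) : grevlex σ τ := by
  obtain ⟨k, hk, hk'⟩ := exists_lastDiff hne
  exact grevlex_of_natAdd hdeg k (lt_of_le_of_ne (hle k) hk) fun j hj => (hk' j hj).symm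

lemma eq_or_grevlex_of_yOnly {σ τ : Fin (c + d) →₀ ℕ} (hσ : yOnly c d σ)
    (hdeg : degE σ = degE τ) (hle : ∀ j, τ (Fin.natAdd c j) ≤ σ (Fin.natAdd c j)) :
    σ = τ ∨ grevlex σ τ := by
  by_cases hne : (fun j => τ (Fin.natAdd c j)) = fun j => σ (Fin.natAdd c j)
  · left
    have hy : ∀ j, τ (Fin.natAdd c j) = σ (Fin.natAdd c j) := congrFun hne
    have hx : ∑ i, τ (Fin.castAdd d i) = 0 := by
      rw [degE_eq_sum_castAdd_add_sum_natAdd, degE_eq_sum_castAdd_add_sum_natAdd,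
        Finset.sum_congr rfl fun j _ => hy j, Finset.sum_eq_zero fun i _ => hσ i] at hdeg
      omega
    ext v
    induction v using Fin.addCases with
    | left i => rw [hσ i, Finset.sum_eq_zero_iff.mp hx i (Finset.mem_univ i)]
    | right j => exact (hy j).symm
  · exact Or.inr (grevlex_of_natAdd_le hdeg hle hne)

noncomputable def xPart (c d : ℕ) (σ : Fin (c + d) →₀ ℕ) : Fin (c + d) →₀ ℕ :=
  Finsupp.equivFunOnFinite.symm (Fin.addCases (fun i => σ (Fin.castAdd d i)) 0)

noncomputable def yPart (c d : ℕ) (σ : Fin (c + d) →₀ ℕ) : Fin (c + d) →₀ ℕ :=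
  Finsupp.equivFunOnFinite.symm (Fin.addCases 0 fun j => σ (Fin.natAdd c j))

/-- The exponent vector of `y^(z/α)`; it maps to `t^z` only when `α` divides every `z j`. -/
noncomputable def yExp (c d α : ℕ) (z : Fin d → ℕ) : Fin (c + d) →₀ ℕ :=
  Finsupp.equivFunOnFinite.symm (Fin.addCases 0 fun j => z j / α)

@[simp] lemma xPart_castAdd (σ : Fin (c + d) →₀ ℕ) (i : Fin c) :
    xPart c d σ (Fin.castAdd d i) = σ (Fin.castAdd d i) := by
  simp [xPart]

@[simp] lemma xPart_natAdd (σ : Fin (c + d) →₀ ℕ) (j : Fin d) :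
    xPart c d σ (Fin.natAdd c j) = 0 := by
  simp [xPart]

@[simp] lemma yPart_castAdd (σ : Fin (c + d) →₀ ℕ) (i : Fin c) :
    yPart c d σ (Fin.castAdd d i) = 0 := by
  simp [yPart]

@[simp] lemma yPart_natAdd (σ : Fin (c + d) →₀ ℕ) (j : Fin d) :
    yPart c d σ (Fin.natAdd c j) = σ (Fin.natAdd c j) := by
  simp [yPart]

@[simp] lemma yExp_castAdd (z : Fin d → ℕ) (i : Fin c) : yExp c d α z (Fin.castAdd d i) = 0 := by
  simp [yExp]

@[simp] lemma yExp_natAdd (z : Fin d → ℕ) (j : Fin d) :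
    yExp c d α z (Fin.natAdd c j) = z j / α := by
  simp [yExp]

lemma xPart_add_yPart (σ : Fin (c + d) →₀ ℕ) : xPart c d σ + yPart c d σ = σ := by
  ext v
  induction v using Fin.addCases <;> simp

lemma xOnly_xPart (σ : Fin (c + d) →₀ ℕ) : xOnly c d (xPart c d σ) := xPart_natAdd σ

lemma yOnly_yPart (σ : Fin (c + d) →₀ ℕ) : yOnly c d (yPart c d σ) := yPart_castAdd σ

lemma yOnly_yExp (z : Fin d → ℕ) : yOnly c d (yExp c d α z) := yExp_castAdd z

@[simp] lemma gens_castAdd (i : Fin c) : gens c d α a (Fin.castAdd d i) = a i := by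
  simp [gens]

@[simp] lemma gens_natAdd (j : Fin d) : gens c d α a (Fin.natAdd c j) = eVec d α j := by
  simp [gens]

lemma valE_add (σ τ : Fin (c + d) →₀ ℕ) :
    valE c d α a (σ + τ) = valE c d α a σ + valE c d α a τ := by
  simp [valE, add_smul, Finset.sum_add_distrib]

lemma valE_single_natAdd (j : Fin d) :
    valE c d α a (Finsupp.single (Fin.natAdd c j) 1) = eVec d α j := by
  simp [valE, Finsupp.single_apply]

lemma valE_apply (σ : Fin (c + d) →₀ ℕ) (j : Fin d) :
    valE c d α a σ j = ∑ v, σ v * gens c d α a v j := by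
  simp [valE, Finset.sum_apply]

lemma sum_valE (hdeg : ∀ i, ∑ j, a i j = α) (σ : Fin (c + d) →₀ ℕ) :
    ∑ j, valE c d α a σ j = α * degE σ := by
  have hgens : ∀ v, ∑ j, gens c d α a v j = α := by
    intro v
    induction v using Fin.addCases <;> simp [hdeg, eVec]
  calc ∑ j, valE c d α a σ j = ∑ v, σ v * ∑ j, gens c d α a v j := by
        simp only [valE_apply, Finset.mul_sum]
        exact Finset.sum_comm
    _ = α * degE σ := by simp only [hgens, degE, Finset.mul_sum, mul_comm]

lemma degE_eq_of_valE_eq (hα : 0 < α) (hdeg : ∀ i, ∑ j, a i j = α) {σ τ : Fin (c + d) →₀ ℕ}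
    (h : valE c d α a σ = valE c d α a τ) : degE σ = degE τ :=
  Nat.eq_of_mul_eq_mul_left hα (by rw [← sum_valE hdeg, ← sum_valE hdeg, h])

lemma valE_mem (hB : B = AddSubmonoid.closure (Set.range a ∪ Set.range (eVec d α)))
    (σ : Fin (c + d) →₀ ℕ) : valE c d α a σ ∈ B := by
  subst hB
  refine AddSubmonoid.sum_mem _ fun v _ => AddSubmonoid.nsmul_mem _ ?_ _
  induction v using Fin.addCases with
  | left i => exact AddSubmonoid.subset_closure (Or.inl ⟨i, (gens_castAdd i).symm⟩)
  | right j => exact AddSubmonoid.subset_closure (Or.inr ⟨j, (gens_natAdd j).symm⟩)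

lemma exists_valE_eq (hB : B = AddSubmonoid.closure (Set.range a ∪ Set.range (eVec d α)))
    {b : Fin d → ℕ} (hb : b ∈ B) : ∃ σ, valE c d α a σ = b := by
  subst hB
  induction hb using AddSubmonoid.closure_induction with
  | mem x hx =>
    rcases hx with ⟨i, rfl⟩ | ⟨j, rfl⟩
    · exact ⟨Finsupp.single (Fin.castAdd d i) 1, by simp [valE, Finsupp.single_apply]⟩
    · exact ⟨Finsupp.single (Fin.natAdd c j) 1, valE_single_natAdd j⟩
  | zero => exact ⟨0, by simp [valE]⟩
  | add x y _ _ hx hy =>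
    obtain ⟨σ, rfl⟩ := hx
    obtain ⟨τ, rfl⟩ := hy
    exact ⟨σ + τ, valE_add σ τ⟩

lemma natAdd_mul_le_valE (σ : Fin (c + d) →₀ ℕ) (j : Fin d) :
    σ (Fin.natAdd c j) * α ≤ valE c d α a σ j := by
  rw [valE_apply]
  calc σ (Fin.natAdd c j) * α = σ (Fin.natAdd c j) * gens c d α a (Fin.natAdd c j) j := by
        simp [eVec]
    _ ≤ ∑ v, σ v * gens c d α a v j :=
        Finset.single_le_sum (f := fun v => σ v * gens c d α a v j)
          (fun v _ => Nat.zero_le _) (Finset.mem_univ _)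

lemma valE_yOnly_apply {τ : Fin (c + d) →₀ ℕ} (hτ : yOnly c d τ) (j : Fin d) :
    valE c d α a τ j = τ (Fin.natAdd c j) * α := by
  rw [valE_apply, Fin.sum_univ_add]
  simp [hτ _, eVec]

lemma valE_yExp {z : Fin d → ℕ} (hz : ∀ j, α ∣ z j) : valE c d α a (yExp c d α z) = z := by
  funext j
  rw [valE_yOnly_apply (yOnly_yExp z), yExp_natAdd, Nat.div_mul_cancel (hz j)]

lemma yOnly.ext_of_valE_eq (hα : 0 < α) {τ τ' : Fin (c + d) →₀ ℕ} (hτ : yOnly c d τ)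
    (hτ' : yOnly c d τ') (h : valE c d α a τ = valE c d α a τ') : τ = τ' := by
  ext v
  induction v using Fin.addCases with
  | left i => rw [hτ i, hτ' i]
  | right j =>
    have := congrFun h j
    rw [valE_yOnly_apply hτ, valE_yOnly_apply hτ'] at this
    exact Nat.eq_of_mul_eq_mul_right hα this

lemma Rel.refl (x : Fin d → ℕ) : Rel α x x := fun j => by simp

lemma Rel.symm {x y : Fin d → ℕ} (h : Rel α x y) : Rel α y x := fun j => dvd_sub_comm.mp (h j)

lemma Rel.trans {x y z : Fin d → ℕ} (h : Rel α x y) (h' : Rel α y z) : Rel α x z := fun j => by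
  simpa using dvd_add (h j) (h' j)

lemma dvd_joinSub {x y : Fin d → ℕ} (h : Rel α x y) (j : Fin d) : α ∣ joinSub x y j := by
  rcases le_total (x j) (y j) with hle | hle
  · simp [joinSub, hle]
  · rw [joinSub, max_eq_left hle, ← Int.natCast_dvd_natCast, Nat.cast_sub hle]
    exact h j

lemma add_joinSub (x y : Fin d → ℕ) : y + joinSub x y = x ⊔ y := by
  funext j
  simp only [Pi.add_apply, joinSub, Pi.sup_apply]
  omega

lemma rel_of_add_valE_eq {b b' : Fin d → ℕ} {τ τ' : Fin (c + d) →₀ ℕ} (hτ : yOnly c d τ)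
    (hτ' : yOnly c d τ') (h : b + valE c d α a τ = b' + valE c d α a τ') : Rel α b b' := by
  intro j
  have hj := congrFun h j
  simp only [Pi.add_apply, valE_yOnly_apply hτ, valE_yOnly_apply hτ'] at hj
  exact ⟨τ' (Fin.natAdd c j) - τ (Fin.natAdd c j), by linarith⟩

lemma exists_eq_yExp_joinSub_add {b b' : Fin d → ℕ} {τ τ' : Fin (c + d) →₀ ℕ}
    (hτ : yOnly c d τ) (h : b + valE c d α a τ = b' + valE c d α a τ') :
    ∃ ρ, yOnly c d ρ ∧ τ = yExp c d α (joinSub b' b) + ρ := by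
  have hle : yExp c d α (joinSub b' b) ≤ τ := by
    intro v
    induction v using Fin.addCases with
    | left i => simp
    | right j =>
      have hj := congrFun h j
      simp only [Pi.add_apply, valE_yOnly_apply hτ] at hj
      rw [yExp_natAdd]
      exact Nat.div_le_of_le_mul (by simp only [joinSub]; rw [mul_comm]; omega)
  refine ⟨τ - yExp c d α (joinSub b' b), fun i => by simp [hτ i], ?_⟩
  exact (add_tsub_cancel_of_le hle).symm

structure IsMinRep (c d α : ℕ) (a : Fin c → Fin d → ℕ) (B : AddSubmonoid (Fin d → ℕ))
    (m : (Fin d → ℕ) → (Fin (c + d) →₀ ℕ)) : Prop where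
  valE_eq : ∀ b ∈ B, valE c d α a (m b) = b
  eq_or_grevlex : ∀ b ∈ B, ∀ σ, valE c d α a σ = b → m b = σ ∨ grevlex (m b) σ

lemma IsMinRep.not_grevlex (hm : IsMinRep c d α a B m) {b : Fin d → ℕ} (hb : b ∈ B)
    {τ : Fin (c + d) →₀ ℕ} (hτ : valE c d α a τ = b) : ¬ grevlex τ (m b) := by
  rcases hm.eq_or_grevlex b hb τ hτ with rfl | h
  · exact grevlex_irrefl _
  · exact grevlex_asymm h

/-- `m (valE σ) = σ` encodes `σ ∈ M_B`; thus `M_B` is closed under taking divisors. -/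
lemma IsMinRep.m_valE_of_add (hm : IsMinRep c d α a B m)
    (hB : B = AddSubmonoid.closure (Set.range a ∪ Set.range (eVec d α)))
    {σ τ : Fin (c + d) →₀ ℕ} (h : m (valE c d α a (σ + τ)) = σ + τ) :
    m (valE c d α a σ) = σ := by
  rcases hm.eq_or_grevlex _ (valE_mem hB σ) σ rfl with h' | h'
  · exact h'
  refine absurd (grevlex_add_right h' τ) ?_
  rw [← h]
  refine hm.not_grevlex (valE_mem hB _) ?_
  rw [valE_add, hm.valE_eq _ (valE_mem hB σ), valE_add]

lemma Amon_le (hB : B = AddSubmonoid.closure (Set.range a ∪ Set.range (eVec d α))) :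
    Amon d α ≤ B :=
  hB ▸ AddSubmonoid.closure_mono Set.subset_union_right

lemma exists_eq_add_eVec_of_mem_Amon {z : Fin d → ℕ} (hz : z ∈ Amon d α) (hz0 : z ≠ 0) :
    ∃ j, ∃ z' ∈ Amon d α, z = z' + eVec d α j := by
  induction hz using AddSubmonoid.closure_induction with
  | mem x hx =>
    obtain ⟨j, rfl⟩ := hx
    exact ⟨j, 0, zero_mem _, (zero_add _).symm⟩
  | zero => exact absurd rfl hz0
  | add x y hx hy ihx ihy =>
    by_cases hx0 : x = 0
    · subst hx0
      rw [zero_add] at hz0 ⊢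
      exact ihy hz0
    · obtain ⟨j, x', hx', rfl⟩ := ihx hx0
      exact ⟨j, x' + y, add_mem hx' hy, add_right_comm _ _ _⟩

lemma xOnly_of_valE_mem_BA (hα : 0 < α)
    (hB : B = AddSubmonoid.closure (Set.range a ∪ Set.range (eVec d α)))
    {σ : Fin (c + d) →₀ ℕ} (h : valE c d α a σ ∈ BA B α) : xOnly c d σ := by
  intro j
  by_contra hj
  have hle : Finsupp.single (Fin.natAdd c j) 1 ≤ σ := Finsupp.single_le_iff.mpr (by omega)
  refine h.2 (eVec d α j) (AddSubmonoid.subset_closure (Set.mem_range_self j)) (fun h0 => ?_)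
    _ (valE_mem hB (σ - Finsupp.single (Fin.natAdd c j) 1)) ?_
  · have := congrFun h0 j
    simp [eVec] at this
    omega
  · rw [← valE_single_natAdd (a := a), ← valE_add, tsub_add_cancel_of_le hle]

/-- An element of `B` whose minimal monomial involves no `y` cannot be translated down by any
`eⱼ`: otherwise trading that `eⱼ` for `yⱼ` would give a `≺`-smaller monomial. -/
lemma IsMinRep.mem_BA_of_xOnly (hm : IsMinRep c d α a B m) (hα : 0 < α)
    (hB : B = AddSubmonoid.closure (Set.range a ∪ Set.range (eVec d α)))
    (hdeg : ∀ i, ∑ j, a i j = α) {b : Fin d → ℕ} (hb : b ∈ B) (hx : xOnly c d (m b)) :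
    b ∈ BA B α := by
  refine ⟨hb, fun z hz hz0 y hy hbyz => ?_⟩
  obtain ⟨j, z', hz', rfl⟩ := exists_eq_add_eVec_of_mem_Amon hz hz0
  obtain ⟨ρ, hρ⟩ := exists_valE_eq hB (add_mem hy (Amon_le hB hz'))
  have hval : valE c d α a (ρ + Finsupp.single (Fin.natAdd c j) 1) = b := by
    rw [valE_add, hρ, valE_single_natAdd, hbyz, add_assoc]
  refine hm.not_grevlex hb hval (grevlex_of_natAdd_le ?_ (fun j' => by simp [hx j']) ?_)
  · exact degE_eq_of_valE_eq hα hdeg (by rw [hval, hm.valE_eq b hb])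
  · intro hne
    have := congrFun hne j
    simp [hx j] at this

lemma IsMinRep.mem_BA_iff (hm : IsMinRep c d α a B m) (hα : 0 < α)
    (hB : B = AddSubmonoid.closure (Set.range a ∪ Set.range (eVec d α)))
    (hdeg : ∀ i, ∑ j, a i j = α) {b : Fin d → ℕ} :
    b ∈ BA B α ↔ b ∈ B ∧ xOnly c d (m b) :=
  ⟨fun h => ⟨h.1, xOnly_of_valE_mem_BA hα hB ((hm.valE_eq b h.1).symm ▸ h)⟩,
    fun h => hm.mem_BA_of_xOnly hα hB hdeg h.1 h.2⟩

lemma IsMinRep.m_eq_yExp (hm : IsMinRep c d α a B m) (hα : 0 < α)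
    (hB : B = AddSubmonoid.closure (Set.range a ∪ Set.range (eVec d α)))
    (hdeg : ∀ i, ∑ j, a i j = α) {z : Fin d → ℕ} (hz : ∀ j, α ∣ z j) :
    m z = yExp c d α z := by
  have hzB : z ∈ B := valE_yExp (a := a) hz ▸ valE_mem hB _
  have hmz := hm.valE_eq z hzB
  refine (hm.eq_or_grevlex z hzB _ (valE_yExp hz)).resolve_right fun h => ?_
  have hle : ∀ j, m z (Fin.natAdd c j) ≤ yExp c d α z (Fin.natAdd c j) := fun j => by
    rw [yExp_natAdd, Nat.le_div_iff_mul_le hα]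
    exact (natAdd_mul_le_valE (a := a) (m z) j).trans_eq (congrFun hmz j)
  rcases eq_or_grevlex_of_yOnly (yOnly_yExp z)
    (degE_eq_of_valE_eq hα hdeg (by rw [valE_yExp hz, hmz])) hle with h' | h'
  · exact grevlex_irrefl _ (h' ▸ h)
  · exact grevlex_asymm h h'

lemma valE_add_yExp_joinSub {σ : Fin (c + d) →₀ ℕ} {x b : Fin d → ℕ}
    (hσ : valE c d α a σ = b) (hrel : Rel α x b) :
    valE c d α a (σ + yExp c d α (joinSub x b)) = x ⊔ b := by
  rw [valE_add, hσ, valE_yExp (dvd_joinSub hrel), add_joinSub]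

/-- The two lifts of `b₁ ∨ b₂` obtained from `b₁ ≺ b₂` by multiplying with `y`'s compare the
other way round: at the last coordinate `k` where `b₁` and `b₂` differ, only the first one
picks up a `y_k`. -/
lemma grevlex_add_yExp_joinSub (hα : 0 < α) (hdeg : ∀ i, ∑ j, a i j = α)
    {σ₁ σ₂ : Fin (c + d) →₀ ℕ} {b₁ b₂ : Fin d → ℕ} (hx₁ : xOnly c d σ₁) (hx₂ : xOnly c d σ₂)
    (hv₁ : valE c d α a σ₁ = b₁) (hv₂ : valE c d α a σ₂ = b₂) (hrel : Rel α b₁ b₂)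
    (hlt : ltCls b₁ b₂) :
    grevlex (σ₁ + yExp c d α (joinSub b₂ b₁)) (σ₂ + yExp c d α (joinSub b₁ b₂)) := by
  obtain ⟨k, hk, hk'⟩ := hlt
  refine grevlex_of_natAdd (degE_eq_of_valE_eq hα hdeg ?_) k ?_ fun j hj => ?_
  · rw [valE_add_yExp_joinSub hv₁ hrel.symm, valE_add_yExp_joinSub hv₂ hrel, sup_comm]
  · have hdvd : α ∣ b₂ k - b₁ k := by
      simpa [joinSub, hk.le] using dvd_joinSub hrel.symm k
    have hpos : 0 < (b₂ k - b₁ k) / α := Nat.div_pos (Nat.le_of_dvd (by omega) hdvd) hα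
    simpa [hx₁ k, hx₂ k, joinSub, hk.le] using hpos
  · simp [hx₁ j, hx₂ j, joinSub, hk' j hj]

/-- For `b' ≺ b` in one class of `B_A`, no multiple of `n(b', b)` lies in `M_B`. -/
lemma IsMinRep.m_valE_ne_add_yExp_joinSub (hm : IsMinRep c d α a B m) (hα : 0 < α)
    (hB : B = AddSubmonoid.closure (Set.range a ∪ Set.range (eVec d α)))
    (hdeg : ∀ i, ∑ j, a i j = α) {b b' : Fin d → ℕ} (hb : b ∈ BA B α) (hb' : b' ∈ BA B α)
    (hrel : Rel α b' b) (hlt : ltCls b' b) (ρ : Fin (c + d) →₀ ℕ) :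
    m (valE c d α a (m b + yExp c d α (joinSub b' b) + ρ)) ≠
      m b + yExp c d α (joinSub b' b) + ρ := by
  intro h
  have hswap := grevlex_add_yExp_joinSub hα hdeg ((hm.mem_BA_iff hα hB hdeg).1 hb').2
    ((hm.mem_BA_iff hα hB hdeg).1 hb).2 (hm.valE_eq b' hb'.1) (hm.valE_eq b hb.1) hrel hlt
  refine hm.not_grevlex (valE_mem hB _) (τ := m b' + yExp c d α (joinSub b b') + ρ) ?_
    (by rw [h]; exact grevlex_add_right hswap ρ)
  rw [valE_add, valE_add (m b + _), valE_add_yExp_joinSub (hm.valE_eq b' hb'.1) hrel.symm,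
    valE_add_yExp_joinSub (hm.valE_eq b hb.1) hrel, sup_comm]

lemma IsMinRep.exists_mem_MGamma (hm : IsMinRep c d α a B m) (hα : 0 < α)
    (hB : B = AddSubmonoid.closure (Set.range a ∪ Set.range (eVec d α)))
    (hdeg : ∀ i, ∑ j, a i j = α) {σ : Fin (c + d) →₀ ℕ} (hσ : m (valE c d α a σ) = σ) :
    ∃ Γ, IsClass B α Γ ∧ σ ∈ MGamma c d α m Γ := by
  set b := valE c d α a (xPart c d σ)
  have hmb : m b = xPart c d σ :=
    hm.m_valE_of_add hB (τ := yPart c d σ) (by rw [xPart_add_yPart]; exact hσ)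
  have hbBA : b ∈ BA B α :=
    (hm.mem_BA_iff hα hB hdeg).2 ⟨valE_mem hB _, hmb ▸ xOnly_xPart σ⟩
  refine ⟨_, ⟨b, hbBA, rfl⟩, b, ⟨hbBA, Rel.refl b⟩,
    ⟨yPart c d σ, yOnly_yPart σ, by rw [hmb, xPart_add_yPart]⟩, ?_⟩
  rintro b' ⟨hb'BA, hrel⟩ hlt ⟨τ, -, hστ⟩
  rw [hm.m_eq_yExp hα hB hdeg (dvd_joinSub hrel.symm)] at hστ
  exact hm.m_valE_ne_add_yExp_joinSub hα hB hdeg hbBA hb'BA hrel.symm hlt τ (hστ ▸ hσ)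

/-- Write `m_{b + valE τ} = m_{b'}·y^τ'` with `b' ∈ B_A`; then `b ∼ b'`, and comparing `b` with
`b'` either identifies the two monomials or exhibits a multiple of some `n(·, ·)`. -/
lemma IsMinRep.m_valE_eq_of_mem_MGamma (hm : IsMinRep c d α a B m) (hα : 0 < α)
    (hB : B = AddSubmonoid.closure (Set.range a ∪ Set.range (eVec d α)))
    (hdeg : ∀ i, ∑ j, a i j = α) {Γ : Set (Fin d → ℕ)} (hΓ : IsClass B α Γ)
    {σ : Fin (c + d) →₀ ℕ} (hσ : σ ∈ MGamma c d α m Γ) : m (valE c d α a σ) = σ := by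
  obtain ⟨x₀, -, rfl⟩ := hΓ
  obtain ⟨b, ⟨hbBA, hx₀b⟩, ⟨τ, hτ, rfl⟩, havoid⟩ := hσ
  set σ' := m (valE c d α a (m b + τ))
  have hvσ' : valE c d α a σ' = valE c d α a (m b + τ) := hm.valE_eq _ (valE_mem hB _)
  have hσ' : m (valE c d α a σ') = σ' := by rw [hvσ']
  set b' := valE c d α a (xPart c d σ')
  have hmb' : m b' = xPart c d σ' :=
    hm.m_valE_of_add hB (τ := yPart c d σ') (by rw [xPart_add_yPart]; exact hσ')
  have hb'BA : b' ∈ BA B α :=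
    (hm.mem_BA_iff hα hB hdeg).2 ⟨valE_mem hB _, hmb' ▸ xOnly_xPart σ'⟩
  have hσ'eq : σ' = m b' + yPart c d σ' := by rw [hmb', xPart_add_yPart]
  have hval : b + valE c d α a τ = b' + valE c d α a (yPart c d σ') := by
    rw [← hm.valE_eq b hbBA.1, ← valE_add, ← hvσ', ← valE_add, xPart_add_yPart]
  have hrel : Rel α b b' := rel_of_add_valE_eq hτ (yOnly_yPart σ') hval
  rcases ltCls_trichotomy b b' with heq | hlt | hlt
  · rw [← heq] at hval
    rw [hσ'eq, ← heq, yOnly.ext_of_valE_eq hα hτ (yOnly_yPart σ') (add_left_cancel hval)]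
  · obtain ⟨ρ, -, hρ⟩ := exists_eq_yExp_joinSub_add (yOnly_yPart σ') hval.symm
    refine absurd hσ' ?_
    rw [hσ'eq, hρ, ← add_assoc]
    exact hm.m_valE_ne_add_yExp_joinSub hα hB hdeg hb'BA hbBA hrel hlt ρ
  · obtain ⟨ρ, hρy, hρ⟩ := exists_eq_yExp_joinSub_add hτ hval
    refine absurd ⟨ρ, hρy, ?_⟩ (havoid b' ⟨hb'BA, hx₀b.trans hrel⟩ hlt)
    rw [hρ, hm.m_eq_yExp hα hB hdeg (dvd_joinSub hrel.symm), add_assoc]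

end SimplicialToric

theorem MB_eq_union_MGamma_general
    (c d α : ℕ) (hα : 0 < α)
    (a : Fin c → Fin d → ℕ) (B : AddSubmonoid (Fin d → ℕ))
    (hBgen : B = AddSubmonoid.closure (Set.range a ∪ Set.range (eVec d α)))
    (hdeg : ∀ i, ∑ j, a i j = α)
    (m : (Fin d → ℕ) → (Fin (c + d) →₀ ℕ))
    (hmval : ∀ b ∈ B, valE c d α a (m b) = b)
    (hmmin : ∀ b ∈ B, ∀ σ, valE c d α a σ = b → m b = σ ∨ grevlex (m b) σ) :
    {σ : Fin (c + d) →₀ ℕ | ∃ b ∈ (B : Set (Fin d → ℕ)), σ = m b}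
      = {σ | ∃ Γ, IsClass B α Γ ∧ σ ∈ MGamma c d α m Γ} := by
  have hm : IsMinRep c d α a B m := ⟨hmval, hmmin⟩
  ext σ
  constructor
  · rintro ⟨b, hb, rfl⟩
    exact hm.exists_mem_MGamma hα hBgen hdeg (by rw [hmval b hb])
  · rintro ⟨Γ, hΓ, hσ⟩
    exact ⟨_, valE_mem hBgen σ, (hm.m_valE_eq_of_mem_MGamma hα hBgen hdeg hΓ hσ).symm⟩

/-- `M_B = ∪ᵢ M_{Γᵢ}`, the union over all equivalence classes of `B_A`. -/
theorem MB_eq_union_MGamma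
    (c d α : ℕ) (hα : 0 < α)
    (a : Fin c → Fin d → ℕ) (B : AddSubmonoid (Fin d → ℕ))
    (hBgen : B = AddSubmonoid.closure (Set.range a ∪ Set.range (eVec d α)))
    (hhilb : Hilb B = Set.range a ∪ Set.range (eVec d α))
    (hdeg : ∀ i, ∑ j, a i j = α)
    (m : (Fin d → ℕ) → (Fin (c + d) →₀ ℕ))
    (hmval : ∀ b ∈ B, valE c d α a (m b) = b)
    (hmmin : ∀ b ∈ B, ∀ σ, valE c d α a σ = b → m b = σ ∨ grevlex (m b) σ) :
    {σ : Fin (c + d) →₀ ℕ | ∃ b ∈ (B : Set (Fin d → ℕ)), σ = m b}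
      = {σ | ∃ Γ, IsClass B α Γ ∧ σ ∈ MGamma c d α m Γ} :=
  MB_eq_union_MGamma_general c d α hα a B hBgen hdeg m hmval hmmin
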